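/- Let (H,Δ,ε,1,μ,S) be a cocommutative right Hopf algebra over K. Then for all a,b ∈ H: (i) S(a)·1 = S(a); (ii) S(S(a)) = a·1; (iii) S(S(S(a))) = S(a); (iv) Σ S(a⁽¹⁾)a⁽²⁾·1 = ε(a)1; (v) S(ab) = S(b)S(a). Moreover S is unique: any morphism of C³-coalgebras S′ : H → H with Σ a⁽¹⁾S′(a⁽²⁾) = ε(a)1 for all a equals S. -/

import Mathlib

/-! Everything is computed in the convolution product `f ⋆ g = μ ∘ (f ⊗ g) ∘ Δ` on linear maps
out of a coalgebra. It is associative and `e = ε(-) 1` is a left unit, while `f ⋆ e = R ∘ f`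
with `R a = a · 1`; hence `a ⋆ b = e = b ⋆ c` forces `c = R ∘ a`. Applied to `id ⋆ S = e` and
its composites with the coalgebra maps `S` and `μ`, this gives (i)–(iv) and uniqueness.
For (v), both `S ∘ μ` and `a ⊗ b ↦ S(b) S(a)` are right convolution inverses of `R ∘ μ` among
the maps `H ⊗ H → H`, while `S ∘ μ` is also a left one. -/

open TensorProduct

namespace RackPaper

variable (K : Type*) [CommRing K]
variable (B : Type*) [AddCommGroup B] [Module K B]

/-- Comultiplication of the tensor-product coalgebra `B ⊗ B`. -/
noncomputable def comul2 (comul : B →ₗ[K] B ⊗[K] B) :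
    B ⊗[K] B →ₗ[K] (B ⊗[K] B) ⊗[K] (B ⊗[K] B) :=
  (tensorTensorTensorComm K B B B B).toLinearMap ∘ₗ TensorProduct.map comul comul

/-- Counit of the tensor-product coalgebra `B ⊗ B`. -/
noncomputable def counit2 (counit : B →ₗ[K] K) : B ⊗[K] B →ₗ[K] K :=
  (LinearMap.mul' K K) ∘ₗ TensorProduct.map counit counit

/-- `(B, comul, counit, one)` is a coassociative counital coaugmented coalgebra. -/
structure IsC3Coalgebra (comul : B →ₗ[K] B ⊗[K] B) (counit : B →ₗ[K] K) (one : B) : Prop where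
  coassoc : (TensorProduct.assoc K B B B).toLinearMap ∘ₗ
      (TensorProduct.map comul LinearMap.id) ∘ₗ comul
      = (TensorProduct.map LinearMap.id comul) ∘ₗ comul
  counit_comul : (TensorProduct.lid K B).toLinearMap ∘ₗ
      (TensorProduct.map counit LinearMap.id) ∘ₗ comul = LinearMap.id
  comul_counit : (TensorProduct.rid K B).toLinearMap ∘ₗ
      (TensorProduct.map LinearMap.id counit) ∘ₗ comul = LinearMap.id
  comul_one : comul one = one ⊗ₜ[K] one
  counit_one : counit one = 1

/-- A cocommutative right Hopf algebra `(H, Δ, ε, 1, μ, S)`: a cocommutative C³-coalgebra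
with an associative left-unital multiplication `μ` which is a morphism of C³-coalgebras,
together with a right antipode `S`, i.e. a morphism of C³-coalgebras with
`Σ a⁽¹⁾ S(a⁽²⁾) = ε(a) 1`. -/
structure IsRightHopf (comul : B →ₗ[K] B ⊗[K] B) (counit : B →ₗ[K] K) (one : B)
    (mul : B ⊗[K] B →ₗ[K] B) (S : B →ₗ[K] B) : Prop where
  isC3 : IsC3Coalgebra K B comul counit one
  cocomm : ∀ x : B, (TensorProduct.comm K B B) (comul x) = comul x
  comul_mul : comul ∘ₗ mul = (TensorProduct.map mul mul) ∘ₗ comul2 K B comul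
  counit_mul : counit ∘ₗ mul = counit2 K B counit
  mul_assoc : ∀ a b c : B, mul (mul (a ⊗ₜ[K] b) ⊗ₜ[K] c) = mul (a ⊗ₜ[K] mul (b ⊗ₜ[K] c))
  one_mul : ∀ a : B, mul (one ⊗ₜ[K] a) = a
  comul_S : comul ∘ₗ S = (TensorProduct.map S S) ∘ₗ comul
  counit_S : counit ∘ₗ S = counit
  S_one : S one = one
  right_antipode : ∀ a : B,
    mul ((TensorProduct.map LinearMap.id S) (comul a)) = counit a • one

section Convolution
variable {K B}

/-- Its Mathlib tensor square `B ⊗ B` has comultiplication `comul2` (definitionally) and counit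
`counit2` (`counit2_counit`). -/
abbrev IsC3Coalgebra.toCoalgebra {comul : B →ₗ[K] B ⊗[K] B} {counit : B →ₗ[K] K} {one : B}
    (h : IsC3Coalgebra K B comul counit one) : Coalgebra K B where
  comul := comul
  counit := counit
  coassoc := h.coassoc
  rTensor_counit_comp_comul := by
    ext b
    exact (TensorProduct.lid K B).eq_symm_apply.mpr (LinearMap.congr_fun h.counit_comul b)
  lTensor_counit_comp_comul := by
    ext b
    exact (TensorProduct.rid K B).eq_symm_apply.mpr (LinearMap.congr_fun h.comul_counit b)

variable {C D : Type*} [AddCommGroup C] [Module K C] [Coalgebra K C]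
  [AddCommGroup D] [Module K D] [Coalgebra K D]

lemma counit2_counit :
    counit2 K C Coalgebra.counit = (Coalgebra.counit : C ⊗[K] C →ₗ[K] K) := by
  ext a b
  simp [counit2, mul_comm]

structure IsAssocLeftUnital (mul : B ⊗[K] B →ₗ[K] B) (one : B) : Prop where
  mul_assoc : ∀ a b c : B, mul (mul (a ⊗ₜ b) ⊗ₜ c) = mul (a ⊗ₜ mul (b ⊗ₜ c))
  one_mul : ∀ a : B, mul (one ⊗ₜ a) = a

variable (mul : B ⊗[K] B →ₗ[K] B) (one : B)

noncomputable def conv (f g : C →ₗ[K] B) : C →ₗ[K] B :=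
  mul ∘ₗ map f g ∘ₗ Coalgebra.comul

noncomputable def convOne : C →ₗ[K] B :=
  LinearMap.toSpanSingleton K B one ∘ₗ Coalgebra.counit

noncomputable def mulRight : B →ₗ[K] B :=
  mul ∘ₗ (TensorProduct.mk K B B).flip one

variable {mul one}

lemma conv_apply (f g : C →ₗ[K] B) (c : C) :
    conv mul f g c = mul (map f g (Coalgebra.comul c)) := rfl

lemma convOne_apply (c : C) :
    (convOne one : C →ₗ[K] B) c = Coalgebra.counit (R := K) c • one := rfl

lemma mulRight_apply (a : B) : mulRight mul one a = mul (a ⊗ₜ one) := rfl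

lemma conv_assoc (hmul : ∀ a b c : B, mul (mul (a ⊗ₜ b) ⊗ₜ c) = mul (a ⊗ₜ mul (b ⊗ₜ c)))
    (f g h : C →ₗ[K] B) : conv mul (conv mul f g) h = conv mul f (conv mul g h) := by
  have hmul' : mul ∘ₗ map (mul ∘ₗ map f g) h
      = mul ∘ₗ map f (mul ∘ₗ map g h) ∘ₗ (TensorProduct.assoc K C C C).toLinearMap := by
    ext a b c
    simp [hmul]
  ext c
  calc conv mul (conv mul f g) h c
      = mul (map (mul ∘ₗ map f g) h (Coalgebra.comul.rTensor C (Coalgebra.comul c))) := by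
        rw [LinearMap.map_rTensor]; rfl
    _ = mul (map f (mul ∘ₗ map g h) (Coalgebra.comul.lTensor C (Coalgebra.comul c))) := by
        rw [← Coalgebra.coassoc_apply]; exact LinearMap.congr_fun hmul' _
    _ = conv mul f (conv mul g h) c := by
        rw [LinearMap.map_lTensor]; rfl

lemma conv_comp (h : D →ₗ[K] C) (hh : Coalgebra.comul ∘ₗ h = map h h ∘ₗ Coalgebra.comul)
    (f g : C →ₗ[K] B) : conv mul f g ∘ₗ h = conv mul (f ∘ₗ h) (g ∘ₗ h) :=
  calc conv mul f g ∘ₗ h = mul ∘ₗ map f g ∘ₗ (Coalgebra.comul ∘ₗ h) := rfl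
    _ = mul ∘ₗ (map f g ∘ₗ map h h) ∘ₗ Coalgebra.comul := by rw [hh]; rfl
    _ = conv mul (f ∘ₗ h) (g ∘ₗ h) := by rw [← map_comp]; rfl

lemma convOne_comp (h : D →ₗ[K] C) (hh : Coalgebra.counit ∘ₗ h = Coalgebra.counit) :
    convOne one ∘ₗ h = convOne one := by
  rw [convOne, LinearMap.comp_assoc, hh]; rfl

lemma convOne_conv (hone : ∀ a : B, mul (one ⊗ₜ a) = a) (f : C →ₗ[K] B) :
    conv mul (convOne one) f = f := by
  ext c
  calc conv mul (convOne one) f c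
      = mul (map (LinearMap.toSpanSingleton K B one) f
          (Coalgebra.counit.rTensor C (Coalgebra.comul c))) := by
        rw [LinearMap.map_rTensor]; rfl
    _ = f c := by simp [hone]

lemma conv_convOne (f : C →ₗ[K] B) : conv mul f (convOne one) = mulRight mul one ∘ₗ f := by
  ext c
  calc conv mul f (convOne one) c
      = mul (map f (LinearMap.toSpanSingleton K B one)
          (Coalgebra.counit.lTensor C (Coalgebra.comul c))) := by
        rw [LinearMap.map_lTensor]; rfl
    _ = mulRight mul one (f c) := by simp [mulRight_apply]

lemma conv_mulRight_comp (hB : IsAssocLeftUnital mul one) (f g : C →ₗ[K] B) :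
    conv mul (mulRight mul one ∘ₗ f) g = conv mul f g := by
  rw [← conv_convOne, conv_assoc hB.mul_assoc, convOne_conv hB.one_mul]

lemma mulRight_comp_conv (hmul : ∀ a b c : B, mul (mul (a ⊗ₜ b) ⊗ₜ c) = mul (a ⊗ₜ mul (b ⊗ₜ c)))
    (f g : C →ₗ[K] B) :
    mulRight mul one ∘ₗ conv mul f g = conv mul f (mulRight mul one ∘ₗ g) := by
  rw [← conv_convOne, ← conv_convOne, conv_assoc hmul]

lemma eq_mulRight_comp_of_conv_eq_convOne (hB : IsAssocLeftUnital mul one) {f g h : C →ₗ[K] B}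
    (hfg : conv mul f g = convOne one) (hgh : conv mul g h = convOne one) :
    h = mulRight mul one ∘ₗ f := by
  rw [← convOne_conv hB.one_mul h, ← hfg, conv_assoc hB.mul_assoc, hgh, conv_convOne]

end Convolution

section RightAntipode
variable {K B} [Coalgebra K B] {mul : B ⊗[K] B →ₗ[K] B} {one : B}

structure IsRightAntipode (mul : B ⊗[K] B →ₗ[K] B) (one : B) (T : B →ₗ[K] B) : Prop where
  comul_comp : Coalgebra.comul ∘ₗ T = map T T ∘ₗ Coalgebra.comul
  counit_comp : Coalgebra.counit ∘ₗ T = Coalgebra.counit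
  conv_id : conv mul LinearMap.id T = convOne one

lemma conv_mul_mul_comp_map_comm (hB : IsAssocLeftUnital mul one) {T : B →ₗ[K] B}
    (hT : conv mul LinearMap.id T = convOne one) :
    conv mul mul (mul ∘ₗ map T T ∘ₗ (TensorProduct.comm K B B).toLinearMap) = convOne one := by
  have hT' (a : B) {s : Finset (B × B)} (ha : Coalgebra.comul a = ∑ i ∈ s, i.1 ⊗ₜ[K] i.2) :
      ∑ i ∈ s, mul (i.1 ⊗ₜ T i.2) = Coalgebra.counit (R := K) a • one := by
    simpa [conv_apply, convOne_apply, ha] using LinearMap.congr_fun hT a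
  refine TensorProduct.ext' fun x y => ?_
  obtain ⟨I, hx⟩ := TensorProduct.exists_finset (R := K) (Coalgebra.comul x)
  obtain ⟨J, hy⟩ := TensorProduct.exists_finset (R := K) (Coalgebra.comul y)
  have inner (a c : B) : ∑ j ∈ J, mul (mul (a ⊗ₜ j.1) ⊗ₜ mul (T j.2 ⊗ₜ c))
      = Coalgebra.counit (R := K) y • mul (a ⊗ₜ c) :=
    calc _ = mul (a ⊗ₜ mul ((∑ j ∈ J, mul (j.1 ⊗ₜ T j.2)) ⊗ₜ c)) := by
          simp [hB.mul_assoc, sum_tmul, tmul_sum]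
      _ = _ := by rw [hT' y hy, ← smul_tmul', map_smul, hB.one_mul, tmul_smul, map_smul]
  rw [conv_apply, TensorProduct.comul_tmul, hx, hy, convOne_apply, TensorProduct.counit_tmul]
  simp only [AlgebraTensorModule.tensorTensorTensorComm_tmul, sum_tmul, tmul_sum, map_sum,
    map_tmul, LinearMap.comp_apply, LinearEquiv.coe_coe, comm_tmul]
  rw [Finset.sum_comm]
  simp only [inner, ← Finset.smul_sum, hT' x hx, smul_smul, smul_eq_mul]

lemma conv_comp_eq_convOne {T T' : B →ₗ[K] B} (hT : conv mul LinearMap.id T = convOne one)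
    (hT' : IsRightAntipode mul one T') : conv mul T' (T ∘ₗ T') = convOne one := by
  have h := conv_comp (mul := mul) T' hT'.comul_comp LinearMap.id T
  rwa [LinearMap.id_comp, hT, convOne_comp T' hT'.counit_comp, eq_comm] at h

lemma comp_eq_mulRight (hB : IsAssocLeftUnital mul one) {T T' : B →ₗ[K] B}
    (hT : conv mul LinearMap.id T = convOne one) (hT' : IsRightAntipode mul one T') :
    T ∘ₗ T' = mulRight mul one :=
  eq_mulRight_comp_of_conv_eq_convOne hB hT'.conv_id (conv_comp_eq_convOne hT hT')

lemma mulRight_comp_eq_self (hB : IsAssocLeftUnital mul one) {T : B →ₗ[K] B}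
    (hT : IsRightAntipode mul one T) : mulRight mul one ∘ₗ T = T := by
  have hTR : conv mul T (mulRight mul one) = convOne one := by
    rw [← comp_eq_mulRight hB hT.conv_id hT]
    exact conv_comp_eq_convOne hT.conv_id hT
  have hRT : conv mul (mulRight mul one) T = convOne one :=
    (conv_mulRight_comp hB LinearMap.id T).trans hT.conv_id
  exact (eq_mulRight_comp_of_conv_eq_convOne hB hTR hRT).symm

lemma mulRight_comp_conv_id (hB : IsAssocLeftUnital mul one) {T : B →ₗ[K] B}
    (hT : IsRightAntipode mul one T) :
    mulRight mul one ∘ₗ conv mul T LinearMap.id = convOne one := by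
  rw [mulRight_comp_conv hB.mul_assoc, LinearMap.comp_id, ← comp_eq_mulRight hB hT.conv_id hT]
  exact conv_comp_eq_convOne hT.conv_id hT

lemma comp_mul_eq_mul_map_comm (hB : IsAssocLeftUnital mul one) {T : B →ₗ[K] B}
    (hT : IsRightAntipode mul one T)
    (hmulΔ : Coalgebra.comul ∘ₗ mul = map mul mul ∘ₗ Coalgebra.comul)
    (hmulε : Coalgebra.counit ∘ₗ mul = Coalgebra.counit) :
    T ∘ₗ mul = mul ∘ₗ map T T ∘ₗ (TensorProduct.comm K B B).toLinearMap := by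
  have hcomp (f g : B →ₗ[K] B) : conv mul (f ∘ₗ mul) (g ∘ₗ mul) = conv mul f g ∘ₗ mul :=
    (conv_comp mul hmulΔ f g).symm
  have h_left : conv mul (T ∘ₗ mul) (mulRight mul one ∘ₗ mul) = convOne one := by
    rw [← mulRight_comp_conv hB.mul_assoc, show conv mul (T ∘ₗ mul) mul
      = conv mul T LinearMap.id ∘ₗ mul from hcomp T LinearMap.id, ← LinearMap.comp_assoc,
      mulRight_comp_conv_id hB hT, convOne_comp _ hmulε]
  have h_comp : conv mul (mulRight mul one ∘ₗ mul) (T ∘ₗ mul) = convOne one := by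
    rw [conv_mulRight_comp hB, show conv mul mul (T ∘ₗ mul)
      = conv mul LinearMap.id T ∘ₗ mul from hcomp LinearMap.id T, hT.conv_id,
      convOne_comp _ hmulε]
  have h_rev : conv mul (mulRight mul one ∘ₗ mul)
      (mul ∘ₗ map T T ∘ₗ (TensorProduct.comm K B B).toLinearMap) = convOne one := by
    rw [conv_mulRight_comp hB]
    exact conv_mul_mul_comp_map_comm hB hT.conv_id
  exact (eq_mulRight_comp_of_conv_eq_convOne hB h_left h_comp).trans
    (eq_mulRight_comp_of_conv_eq_convOne hB h_left h_rev).symm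

lemma IsRightAntipode.unique (hB : IsAssocLeftUnital mul one) {T T' : B →ₗ[K] B}
    (hT : IsRightAntipode mul one T) (hT' : IsRightAntipode mul one T') : T' = T :=
  calc T' = (T ∘ₗ T) ∘ₗ T' := by
        rw [comp_eq_mulRight hB hT.conv_id hT, mulRight_comp_eq_self hB hT']
    _ = T ∘ₗ (T ∘ₗ T) := by
        rw [LinearMap.comp_assoc, comp_eq_mulRight hB hT.conv_id hT',
          comp_eq_mulRight hB hT.conv_id hT]
    _ = T := by
        rw [← LinearMap.comp_assoc, comp_eq_mulRight hB hT.conv_id hT,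
          mulRight_comp_eq_self hB hT]

end RightAntipode

theorem rightHopf_antipode_properties_general
    (K : Type*) [CommRing K]
    (H : Type*) [AddCommGroup H] [Module K H]
    (comul : H →ₗ[K] H ⊗[K] H) (counit : H →ₗ[K] K) (one : H)
    (mul : H ⊗[K] H →ₗ[K] H) (S : H →ₗ[K] H)
    (hH : IsRightHopf K H comul counit one mul S) :
    (∀ a : H, mul (S a ⊗ₜ[K] one) = S a) ∧
    (∀ a : H, S (S a) = mul (a ⊗ₜ[K] one)) ∧
    (∀ a : H, S (S (S a)) = S a) ∧
    (∀ a : H, mul ((mul ((TensorProduct.map S LinearMap.id) (comul a))) ⊗ₜ[K] one)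
      = counit a • one) ∧
    (∀ a b : H, S (mul (a ⊗ₜ[K] b)) = mul (S b ⊗ₜ[K] S a)) ∧
    (∀ S' : H →ₗ[K] H,
      comul ∘ₗ S' = (TensorProduct.map S' S') ∘ₗ comul →
      counit ∘ₗ S' = counit → S' one = one →
      (∀ a : H, mul ((TensorProduct.map LinearMap.id S') (comul a)) = counit a • one) →
      S' = S) := by
  let := hH.isC3.toCoalgebra
  have hB : IsAssocLeftUnital mul one := ⟨hH.mul_assoc, hH.one_mul⟩
  have hS : IsRightAntipode mul one S :=
    ⟨hH.comul_S, hH.counit_S, LinearMap.ext hH.right_antipode⟩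
  have hSS := comp_eq_mulRight hB hS.conv_id hS
  have hRS := mulRight_comp_eq_self hB hS
  have hSmul := comp_mul_eq_mul_map_comm hB hS hH.comul_mul (hH.counit_mul.trans counit2_counit)
  refine ⟨LinearMap.congr_fun hRS, LinearMap.congr_fun hSS,
    fun a => (LinearMap.congr_fun hSS (S a)).trans (LinearMap.congr_fun hRS a),
    LinearMap.congr_fun (mulRight_comp_conv_id hB hS),
    fun a b => by simpa using LinearMap.congr_fun hSmul (a ⊗ₜ b),
    fun S' hΔ hε _ hS' => hS.unique hB ⟨hΔ, hε, LinearMap.ext hS'⟩⟩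

/-- Let `(H, Δ, ε, 1, μ, S)` be a cocommutative right Hopf algebra over `K`.
Then for all `a, b ∈ H`:
(i) `S(a)·1 = S(a)`;  (ii) `S(S(a)) = a·1`;  (iii) `S(S(S(a))) = S(a)`;
(iv) `Σ S(a⁽¹⁾) a⁽²⁾ · 1 = ε(a) 1`;  (v) `S(ab) = S(b) S(a)`.
Moreover the right antipode is unique: any morphism of C³-coalgebras `S' : H → H` with
`Σ a⁽¹⁾ S'(a⁽²⁾) = ε(a) 1` for all `a` equals `S`. -/
theorem rightHopf_antipode_properties
    (K : Type*) [CommRing K] [Algebra ℚ K]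
    (H : Type*) [AddCommGroup H] [Module K H]
    (comul : H →ₗ[K] H ⊗[K] H) (counit : H →ₗ[K] K) (one : H)
    (mul : H ⊗[K] H →ₗ[K] H) (S : H →ₗ[K] H)
    (hH : IsRightHopf K H comul counit one mul S) :
    (∀ a : H, mul (S a ⊗ₜ[K] one) = S a) ∧
    (∀ a : H, S (S a) = mul (a ⊗ₜ[K] one)) ∧
    (∀ a : H, S (S (S a)) = S a) ∧
    (∀ a : H, mul ((mul ((TensorProduct.map S LinearMap.id) (comul a))) ⊗ₜ[K] one)
      = counit a • one) ∧
    (∀ a b : H, S (mul (a ⊗ₜ[K] b)) = mul (S b ⊗ₜ[K] S a)) ∧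
    (∀ S' : H →ₗ[K] H,
      comul ∘ₗ S' = (TensorProduct.map S' S') ∘ₗ comul →
      counit ∘ₗ S' = counit → S' one = one →
      (∀ a : H, mul ((TensorProduct.map LinearMap.id S') (comul a)) = counit a • one) →
      S' = S) :=
  rightHopf_antipode_properties_general K H comul counit one mul S hH

end RackPaper
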